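/- (ℓ_q-RUB implies robust rank NSP for ℓ_q bound) Let 0 < p ≤ q ≤ 1, r ∈ ℤ₊, k > 1 with kr ∈ ℤ₊. If 𝒜 : ℝ^{m×n} → ℝ^L satisfies the ℓ_q-RUB of order (k+1)r with constants C₁, C₂ satisfying C₂/C₁ < k^{(1/p−1/2)q}, then for every X ∈ ℝ^{m×n}: ‖X_{max(r)}‖_{S_2}^p ≤ (C₁L)^{−p/q} ‖𝒜(X)‖_q^p + (C₂/(C₁ k^{(1/p−1/2)q}))^{p/q} · ‖X_{−max(r)}‖_{S_p}^p / r^{(1/p−1/2)p}. -/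

import Mathlib

open scoped BigOperators

/-- The descending rearrangement of a finite tuple of reals. -/
noncomputable def sortDesc {N : ℕ} (f : Fin N → ℝ) : Fin N → ℝ :=
  fun j => f (Tuple.sort f j.rev)

theorem Matrix.isHermitian_transpose_mul_self {m n : ℕ} (A : Matrix (Fin m) (Fin n) ℝ) :
    (A.transpose * A).IsHermitian := by
  simpa [Matrix.conjTranspose_eq_transpose_of_trivial] using
    Matrix.isHermitian_conjTranspose_mul_self A

/-- The singular values of a real matrix, in nonincreasing order:
`singVal A j` is the `(j+1)`-st largest singular value of `A`. -/
noncomputable def singVal {m n : ℕ} (A : Matrix (Fin m) (Fin n) ℝ) : Fin n → ℝ :=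
  sortDesc (fun i => Real.sqrt ((Matrix.isHermitian_transpose_mul_self A).eigenvalues i))

/-- `schattenP A p = ‖A‖_{S_p}^p`, the sum of the `p`-th powers of the singular values. -/
noncomputable def schattenP {m n : ℕ} (A : Matrix (Fin m) (Fin n) ℝ) (p : ℝ) : ℝ :=
  ∑ j, (singVal A j) ^ p

/-- `headP A r p = ‖A_{max(r)}‖_{S_p}^p`, the `S_p`-quasi-norm (to the `p`) of the best
rank-`r` approximation of `A`. -/
noncomputable def headP {m n : ℕ} (A : Matrix (Fin m) (Fin n) ℝ) (r : ℕ) (p : ℝ) : ℝ :=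
  ∑ j ∈ Finset.univ.filter (fun j : Fin n => (j : ℕ) < r), (singVal A j) ^ p

/-- `tailP A r p = ‖A_{-max(r)}‖_{S_p}^p`, the `S_p`-quasi-norm (to the `p`) of the error
of the best rank-`r` approximation of `A`. -/
noncomputable def tailP {m n : ℕ} (A : Matrix (Fin m) (Fin n) ℝ) (r : ℕ) (p : ℝ) : ℝ :=
  ∑ j ∈ Finset.univ.filter (fun j : Fin n => r ≤ (j : ℕ)), (singVal A j) ^ p

/-!
Let `vⱼ` be the right singular vectors of `X`, sorted by decreasing singular value `σⱼ`. For a set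
`B` of indices, `X * ∑_{j ∈ B} vⱼ vⱼᵀ` has rank at most `#B` and squared Frobenius norm
`∑_{j ∈ B} σⱼ²`. Split the indices into the first `r + s` ones, giving `Z`, and consecutive blocks
of `s` after them, giving `Wᵢ`, so that `X = Z + ∑ Wᵢ`. The lower RUB bound for `Z`, the upper
ones for the `Wᵢ` and the `q`-triangle inequality for `‖·‖_q^q` give
`C₁ L ‖Z‖_F^q ≤ ‖A X‖_q^q + C₂ L ∑ ‖Wᵢ‖_F^q`. As `σ` is nonincreasing, every entry of a block is
at most the `ℓ_p`-mean of the previous block, so `‖Wᵢ‖_F ≤ s^{1/2 - 1/p}` times the `ℓ_p`-norm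
of that block; since `q / p ≥ 1`, the `q`-th powers of these norms sum to at most
`‖X_{-max(r)}‖_{S_p}^q`. Raising to the subadditive power `p / q ≤ 1` gives the claim, `s = k r`.
-/

open Finset Matrix

namespace Real

lemma rpow_sum_le_sum_rpow {ι : Type*} (s : Finset ι) {f : ι → ℝ} (hf : ∀ i ∈ s, 0 ≤ f i)
    {e : ℝ} (he : 0 < e) (he1 : e ≤ 1) :
    (∑ i ∈ s, f i) ^ e ≤ ∑ i ∈ s, f i ^ e :=
  le_sum_of_subadditive_on_pred (· ^ e) (0 ≤ ·) (by simp [zero_rpow he.ne'])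
    (fun _ _ hx hy => rpow_add_le_add_rpow hx hy he.le he1) (fun _ _ => add_nonneg) f hf

lemma sum_rpow_le_rpow_sum {ι : Type*} (s : Finset ι) {f : ι → ℝ} (hf : ∀ i ∈ s, 0 ≤ f i)
    {e : ℝ} (he : 1 ≤ e) :
    ∑ i ∈ s, f i ^ e ≤ (∑ i ∈ s, f i) ^ e := by
  classical
  induction s using Finset.induction_on with
  | empty => simp [zero_rpow (by linarith : e ≠ 0)]
  | insert a s ha ih =>
    rw [forall_mem_insert] at hf
    rw [sum_insert ha, sum_insert ha]
    calc f a ^ e + ∑ i ∈ s, f i ^ e ≤ f a ^ e + (∑ i ∈ s, f i) ^ e := by gcongr; exact ih hf.2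
      _ ≤ (f a + ∑ i ∈ s, f i) ^ e := add_rpow_le_rpow_add hf.1 (sum_nonneg hf.2) he

end Real

open Real

lemma sum_abs_rpow_sub_sum_le {ι κ : Type*} [Fintype ι] (x : ι → ℝ) (S : Finset κ)
    (w : κ → ι → ℝ) {q : ℝ} (hq : 0 < q) (hq1 : q ≤ 1) :
    ∑ t, |(x - ∑ i ∈ S, w i) t| ^ q ≤ ∑ t, |x t| ^ q + ∑ i ∈ S, ∑ t, |w i t| ^ q := by
  rw [sum_comm, ← sum_add_distrib]
  refine sum_le_sum fun t _ => ?_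
  have habs : |(x - ∑ i ∈ S, w i) t| ≤ |x t| + ∑ i ∈ S, |w i t| := by
    rw [Pi.sub_apply, Finset.sum_apply]
    exact (abs_sub _ _).trans (add_le_add_right (abs_sum_le_sum_abs _ _) _)
  calc |(x - ∑ i ∈ S, w i) t| ^ q ≤ (|x t| + ∑ i ∈ S, |w i t|) ^ q :=
        rpow_le_rpow (abs_nonneg _) habs hq.le
    _ ≤ |x t| ^ q + (∑ i ∈ S, |w i t|) ^ q :=
        rpow_add_le_add_rpow (abs_nonneg _) (sum_nonneg fun _ _ => abs_nonneg _) hq.le hq1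
    _ ≤ |x t| ^ q + ∑ i ∈ S, |w i t| ^ q := by
        gcongr
        exact rpow_sum_le_sum_rpow _ (fun _ _ => abs_nonneg _) hq hq1

lemma sum_sum_Ico_blocks {M : Type*} [AddCommMonoid M] (f : ℕ → M) (a s N : ℕ) :
    ∑ i ∈ range N, ∑ j ∈ Ico (a + i * s) (a + i * s + s), f j = ∑ j ∈ Ico a (a + N * s), f j := by
  induction N with
  | zero => simp
  | succ N ih =>
    rw [sum_range_succ, ih, sum_Ico_consecutive _ (by omega) (by omega), add_one_mul,
      add_assoc]

section Antitone

variable {ι : Type*} [LinearOrder ι] {a : ι → ℝ} {I J : Finset ι} {p : ℝ}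

lemma card_mul_rpow_le_sum_of_antitone (ha : Antitone a) (ha0 : ∀ i, 0 ≤ a i) (hp : 0 ≤ p)
    {j : ι} (hj : ∀ i ∈ I, i ≤ j) :
    #I * a j ^ p ≤ ∑ i ∈ I, a i ^ p := by
  simpa using card_nsmul_le_sum I (a · ^ p) (a j ^ p) fun i hi =>
    rpow_le_rpow (ha0 j) (ha (hj i hi)) hp

lemma sum_sq_le_of_antitone (ha : Antitone a) (ha0 : ∀ i, 0 ≤ a i) (hp : 0 < p)
    (hIJ : ∀ i ∈ I, ∀ j ∈ J, i ≤ j) (hJI : #J ≤ #I) :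
    ∑ j ∈ J, a j ^ (2 : ℝ) ≤ #I * ((∑ i ∈ I, a i ^ p) / #I) ^ (2 / p) := by
  have hterm : ∀ j ∈ J, a j ^ (2 : ℝ) ≤ ((∑ i ∈ I, a i ^ p) / #I) ^ (2 / p) := by
    intro j hj
    have hI : (0 : ℝ) < #I := by exact_mod_cast (card_pos.2 ⟨j, hj⟩).trans_le hJI
    have hle : a j ^ p ≤ (∑ i ∈ I, a i ^ p) / #I := by
      rw [le_div_iff₀ hI, mul_comm]
      exact card_mul_rpow_le_sum_of_antitone ha ha0 hp.le fun i hi => hIJ i hi j hj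
    calc a j ^ (2 : ℝ) = (a j ^ p) ^ (2 / p) := by
          rw [← rpow_mul (ha0 j), mul_div_cancel₀ _ hp.ne']
      _ ≤ _ := rpow_le_rpow (rpow_nonneg (ha0 j) p) hle (by positivity)
  calc ∑ j ∈ J, a j ^ (2 : ℝ) ≤ #J * ((∑ i ∈ I, a i ^ p) / #I) ^ (2 / p) := by
        simpa using sum_le_sum hterm
    _ ≤ _ := by
        gcongr
        exact rpow_nonneg
          (div_nonneg (sum_nonneg fun i _ => rpow_nonneg (ha0 i) p) (Nat.cast_nonneg _)) _

/-- Stechkin's estimate for consecutive blocks of a nonincreasing sequence. -/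
lemma rpow_sum_sq_le_of_antitone (ha : Antitone a) (ha0 : ∀ i, 0 ≤ a i) (hp : 0 < p)
    {q : ℝ} (hq : 0 < q) (hIJ : ∀ i ∈ I, ∀ j ∈ J, i ≤ j) (hJI : #J ≤ #I) :
    (∑ j ∈ J, a j ^ (2 : ℝ)) ^ (q / 2) ≤
      (#I : ℝ) ^ ((1 / 2 - 1 / p) * q) * (∑ i ∈ I, a i ^ p) ^ (q / p) := by
  set t := ∑ i ∈ I, a i ^ p
  have ht : 0 ≤ t := sum_nonneg fun i _ => rpow_nonneg (ha0 i) p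
  rcases I.eq_empty_or_nonempty with rfl | hI
  · rw [card_eq_zero.1 (Nat.le_zero.1 hJI)]
    simp only [sum_empty, zero_rpow (by positivity : q / 2 ≠ 0)]
    positivity
  have hc : (0 : ℝ) < #I := by exact_mod_cast hI.card_pos
  calc (∑ j ∈ J, a j ^ (2 : ℝ)) ^ (q / 2) ≤ (#I * (t / #I) ^ (2 / p)) ^ (q / 2) :=
        rpow_le_rpow (sum_nonneg fun j _ => rpow_nonneg (ha0 j) _)
          (sum_sq_le_of_antitone ha ha0 hp hIJ hJI) (by positivity)
    _ = (#I : ℝ) ^ ((1 / 2 - 1 / p) * q) * t ^ (q / p) := by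
        rw [mul_rpow hc.le (by positivity), ← rpow_mul (by positivity), div_rpow ht hc.le,
          sub_mul, rpow_sub hc]
        have h1 : 2 / p * (q / 2) = q / p := by field_simp
        have h2 : 1 / 2 * q = q / 2 := by ring
        have h3 : 1 / p * q = q / p := by ring
        rw [h1, h2, h3]
        ring

namespace Matrix

variable {K l m : Type*} [Field K] [Fintype m]

lemma rank_add_le (A B : Matrix l m K) : (A + B).rank ≤ A.rank + B.rank := by
  rw [rank, rank, rank, mulVecLin_add]
  exact (Submodule.finrank_mono (LinearMap.range_add_le _ _)).trans
    (Submodule.finrank_add_le_finrank_add_finrank _ _)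

lemma rank_sum_le {ι : Type*} (s : Finset ι) (f : ι → Matrix l m K) :
    (∑ i ∈ s, f i).rank ≤ ∑ i ∈ s, (f i).rank := by
  classical
  induction s using Finset.induction_on with
  | empty => simp
  | insert a s ha ih =>
    rw [sum_insert ha, sum_insert ha]
    exact (rank_add_le _ _).trans (by gcongr)

end Matrix

section SingularVectors

variable {m n : ℕ} (X : Matrix (Fin m) (Fin n) ℝ)

/-- The permutation listing the eigenvalues of `Xᵀ * X` in the order used by `singVal`. -/
noncomputable def singPerm : Equiv.Perm (Fin n) :=
  Fin.revPerm.trans (Tuple.sort fun i => √((isHermitian_transpose_mul_self X).eigenvalues i))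

noncomputable def rightSingVec (j : Fin n) : Fin n → ℝ :=
  ⇑((isHermitian_transpose_mul_self X).eigenvectorBasis (singPerm X j))

/-- The singular values as a sequence indexed by `ℕ`, padded with zeros. -/
noncomputable def singValSeq (j : ℕ) : ℝ :=
  if h : j < n then singVal X ⟨j, h⟩ else 0

/-- `vⱼ vⱼᵀ` for the `j`-th right singular vector `vⱼ`, and `0` for `j ≥ n`. -/
noncomputable def singProj (j : ℕ) : Matrix (Fin n) (Fin n) ℝ :=
  if h : j < n then vecMulVec (rightSingVec X ⟨j, h⟩) (rightSingVec X ⟨j, h⟩) else 0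

lemma eigenvalues_transpose_mul_self_nonneg (i : Fin n) :
    0 ≤ (isHermitian_transpose_mul_self X).eigenvalues i :=
  (posSemidef_conjTranspose_mul_self X).eigenvalues_nonneg i

lemma singVal_rpow_two (j : Fin n) :
    singVal X j ^ (2 : ℝ) = (isHermitian_transpose_mul_self X).eigenvalues (singPerm X j) := by
  rw [rpow_two]
  exact sq_sqrt (eigenvalues_transpose_mul_self_nonneg X _)

lemma sum_singVal_rpow_two : ∑ j, singVal X j ^ (2 : ℝ) = (Xᵀ * X).trace := by
  simp_rw [singVal_rpow_two, Equiv.sum_comp,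
    (isHermitian_transpose_mul_self X).trace_eq_sum_eigenvalues, RCLike.ofReal_real_eq_id, id]

lemma singVal_nonneg (j : Fin n) : 0 ≤ singVal X j :=
  sqrt_nonneg _

lemma singValSeq_nonneg (j : ℕ) : 0 ≤ singValSeq X j := by
  unfold singValSeq
  split_ifs
  exacts [singVal_nonneg X _, le_rfl]

lemma antitone_singVal : Antitone (singVal X) := fun _ _ hij =>
  Tuple.monotone_sort (fun i => √((isHermitian_transpose_mul_self X).eigenvalues i))
    (Fin.rev_le_rev.2 hij)

lemma antitone_singValSeq : Antitone (singValSeq X) := by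
  intro i j hij
  by_cases hj : j < n
  · rw [singValSeq, singValSeq, dif_pos hj, dif_pos (hij.trans_lt hj)]
    exact antitone_singVal X (Fin.mk_le_mk.2 hij)
  · rw [singValSeq, dif_neg hj]
    exact singValSeq_nonneg X i

lemma dotProduct_rightSingVec (i j : Fin n) :
    rightSingVec X i ⬝ᵥ rightSingVec X j = if i = j then 1 else 0 := by
  have h := orthonormal_iff_ite.1 (isHermitian_transpose_mul_self X).eigenvectorBasis.orthonormal
    (singPerm X j) (singPerm X i)
  simp only [EuclideanSpace.inner_eq_star_dotProduct, (singPerm X).injective.eq_iff,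
    star_trivial] at h
  simpa [rightSingVec, eq_comm] using h

lemma sum_vecMulVec_rightSingVec : ∑ j, vecMulVec (rightSingVec X j) (rightSingVec X j) = 1 := by
  set V : Matrix (Fin n) (Fin n) ℝ := of fun a j => rightSingVec X j a
  have hVV : Vᵀ * V = 1 := by
    ext i j
    simpa [V, mul_apply, one_apply, dotProduct] using dotProduct_rightSingVec X i j
  ext a b
  simpa [V, mul_apply, Matrix.sum_apply, vecMulVec_apply] using
    congrArg (fun M => M a b) (mul_eq_one_comm.1 hVV)

lemma transpose_mul_self_mulVec_rightSingVec (j : Fin n) :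
    (Xᵀ * X) *ᵥ rightSingVec X j = singVal X j ^ (2 : ℝ) • rightSingVec X j := by
  rw [singVal_rpow_two]
  exact (isHermitian_transpose_mul_self X).mulVec_eigenvectorBasis _

end SingularVectors

section SingularProjections

variable {m n : ℕ} (X : Matrix (Fin m) (Fin n) ℝ)

lemma singProj_of_lt {j : ℕ} (h : j < n) :
    singProj X j = vecMulVec (rightSingVec X ⟨j, h⟩) (rightSingVec X ⟨j, h⟩) :=
  dif_pos h

lemma singProj_of_le {j : ℕ} (h : n ≤ j) : singProj X j = 0 :=
  dif_neg h.not_gt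

lemma singProj_mul_singProj (i j : ℕ) :
    singProj X i * singProj X j = if i = j then singProj X i else 0 := by
  by_cases hi : i < n
  · by_cases hj : j < n
    · rw [singProj_of_lt X hi, singProj_of_lt X hj, vecMulVec_mul_vecMulVec,
        dotProduct_rightSingVec]
      by_cases hij : i = j
      · subst hij; simp
      · simp [hij]
    · rw [singProj_of_le X (not_lt.1 hj), mul_zero, if_neg (by omega)]
  · simp [singProj_of_le X (not_lt.1 hi)]

lemma transpose_singProj (j : ℕ) : (singProj X j)ᵀ = singProj X j := by
  unfold singProj
  split_ifs <;> simp

lemma sum_range_singProj {N : ℕ} (hN : n ≤ N) : ∑ j ∈ range N, singProj X j = 1 := by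
  rw [← sum_range_add_sum_Ico _ hN, sum_eq_zero fun j hj => singProj_of_le X (mem_Ico.1 hj).1,
    add_zero, ← Fin.sum_univ_eq_sum_range]
  simpa only [singProj_of_lt X (Fin.is_lt _), Fin.eta] using sum_vecMulVec_rightSingVec X

lemma rank_singProj_le (j : ℕ) : (singProj X j).rank ≤ 1 := by
  unfold singProj
  split_ifs
  · exact rank_vecMulVec_le _ _
  · simp

lemma trace_transpose_mul_self_mul_singProj (j : ℕ) :
    (Xᵀ * X * singProj X j).trace = singValSeq X j ^ (2 : ℝ) := by
  unfold singProj singValSeq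
  split_ifs
  · rw [mul_vecMulVec, transpose_mul_self_mulVec_rightSingVec, trace_vecMulVec, smul_dotProduct,
      dotProduct_rightSingVec, if_pos rfl, smul_eq_mul, mul_one]
  · simp [zero_rpow two_ne_zero]

lemma eq_mul_sum_singProj_add_sum_blocks (r : ℕ) {s : ℕ} (hs : 0 < s) :
    X = X * ∑ j ∈ range (r + s), singProj X j +
      ∑ i ∈ range n, X * ∑ j ∈ Ico (r + s + i * s) (r + s + i * s + s), singProj X j := by
  calc X = X * ∑ j ∈ range (r + s + n * s), singProj X j := by
        rw [sum_range_singProj X (by nlinarith), Matrix.mul_one]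
    _ = _ := by
        rw [← sum_range_add_sum_Ico _ (le_add_right le_rfl), ← sum_sum_Ico_blocks, Matrix.mul_add,
          Matrix.mul_sum (range n)]

variable (B : Finset ℕ)

lemma sum_singProj_mul_self :
    (∑ j ∈ B, singProj X j) * ∑ j ∈ B, singProj X j = ∑ j ∈ B, singProj X j := by
  simp_rw [sum_mul, mul_sum, singProj_mul_singProj]
  exact sum_congr rfl fun i hi => by simp [hi]

lemma sum_singVal_mul_sum_singProj_rpow_two :
    ∑ j, singVal (X * ∑ j ∈ B, singProj X j) j ^ (2 : ℝ) = ∑ j ∈ B, singValSeq X j ^ (2 : ℝ) := by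
  set Q := ∑ j ∈ B, singProj X j
  have hQ : Qᵀ = Q := by simp only [Q, transpose_sum, transpose_singProj]
  have hQQ : Q * Q = Q := sum_singProj_mul_self X B
  have hXQ : (X * Q)ᵀ * (X * Q) = Q * (Xᵀ * X * Q) := by
    rw [transpose_mul, hQ]
    simp only [Matrix.mul_assoc]
  rw [sum_singVal_rpow_two, hXQ, trace_mul_comm, Matrix.mul_assoc, hQQ, mul_sum, trace_sum]
  exact sum_congr rfl fun j _ => trace_transpose_mul_self_mul_singProj X j

lemma rank_mul_sum_singProj_le : (X * ∑ j ∈ B, singProj X j).rank ≤ #B := by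
  refine (rank_mul_le_right _ _).trans ((rank_sum_le _ _).trans ?_)
  simpa using sum_le_sum fun j (_ : j ∈ B) => rank_singProj_le X j

end SingularProjections

section HeadTail

variable {m n : ℕ} (X : Matrix (Fin m) (Fin n) ℝ) {e : ℝ}

lemma sum_filter_singVal_rpow (he : 0 < e) (P : ℕ → Prop) [DecidablePred P] {N : ℕ}
    (hN : n ≤ N) :
    ∑ j ∈ univ.filter (fun j : Fin n => P j), singVal X j ^ e =
      ∑ j ∈ (range N).filter P, singValSeq X j ^ e := by
  rw [sum_filter, sum_filter, ← sum_range_add_sum_Ico _ hN, sum_eq_zero (s := Ico n N)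
    fun j hj => by simp [singValSeq, (mem_Ico.1 hj).1.not_gt, zero_rpow he.ne'],
    add_zero, ← Fin.sum_univ_eq_sum_range]
  simp [singValSeq]

lemma headP_le_sum_range (he : 0 < e) {r N : ℕ} (hrN : r ≤ N) :
    headP X r e ≤ ∑ j ∈ range N, singValSeq X j ^ e := by
  rw [headP, sum_filter_singVal_rpow X he (· < r) (le_add_right le_rfl : n ≤ n + N)]
  exact sum_le_sum_of_subset_of_nonneg (fun j hj => by simp at hj ⊢; omega)
    fun j _ _ => rpow_nonneg (singValSeq_nonneg X j) e

lemma sum_Ico_le_tailP (he : 0 < e) (r N : ℕ) :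
    ∑ j ∈ Ico r N, singValSeq X j ^ e ≤ tailP X r e := by
  rw [tailP, sum_filter_singVal_rpow X he (r ≤ ·) (le_add_right le_rfl : n ≤ n + N)]
  exact sum_le_sum_of_subset_of_nonneg (fun j hj => by simp at hj ⊢; omega)
    fun j _ _ => rpow_nonneg (singValSeq_nonneg X j) e

lemma tailP_nonneg (r : ℕ) (e : ℝ) : 0 ≤ tailP X r e :=
  sum_nonneg fun j _ => rpow_nonneg (singVal_nonneg X j) e

end HeadTail

section RUB

variable {m n L : ℕ}

/-- The `ℓ_q`-restricted uniform boundedness (`ℓ_q`-RUB) of order `K` with constants `C₁, C₂`. -/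
def IsRUB (A : Matrix (Fin m) (Fin n) ℝ →ₗ[ℝ] (Fin L → ℝ)) (K : ℕ) (q C₁ C₂ : ℝ) : Prop :=
  ∀ Z : Matrix (Fin m) (Fin n) ℝ, Z.rank ≤ K →
    C₁ * ((∑ j, (singVal Z j) ^ (2 : ℝ)) ^ (q / 2)) ≤ (∑ j, |A Z j| ^ q) / L ∧
    (∑ j, |A Z j| ^ q) / L ≤ C₂ * ((∑ j, (singVal Z j) ^ (2 : ℝ)) ^ (q / 2))

variable {A : Matrix (Fin m) (Fin n) ℝ →ₗ[ℝ] (Fin L → ℝ)} {K : ℕ} {p q C₁ C₂ : ℝ}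

lemma IsRUB.mul_le_sum_abs_rpow (hA : IsRUB A K q C₁ C₂) (hL : 0 < L)
    (X : Matrix (Fin m) (Fin n) ℝ) {B : Finset ℕ} (hB : #B ≤ K) :
    C₁ * L * (∑ j ∈ B, singValSeq X j ^ (2 : ℝ)) ^ (q / 2) ≤
      ∑ t, |A (X * ∑ j ∈ B, singProj X j) t| ^ q := by
  have h := (hA _ ((rank_mul_sum_singProj_le X B).trans hB)).1
  rwa [sum_singVal_mul_sum_singProj_rpow_two, le_div_iff₀ (by positivity), mul_right_comm] at h

lemma IsRUB.sum_abs_rpow_le (hA : IsRUB A K q C₁ C₂) (hL : 0 < L)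
    (X : Matrix (Fin m) (Fin n) ℝ) {B : Finset ℕ} (hB : #B ≤ K) :
    ∑ t, |A (X * ∑ j ∈ B, singProj X j) t| ^ q ≤
      C₂ * L * (∑ j ∈ B, singValSeq X j ^ (2 : ℝ)) ^ (q / 2) := by
  have h := (hA _ ((rank_mul_sum_singProj_le X B).trans hB)).2
  rwa [sum_singVal_mul_sum_singProj_rpow_two, div_le_iff₀ (by positivity), mul_right_comm] at h

lemma IsRUB.sum_tail_blocks_le {r s : ℕ} (hA : IsRUB A (s + r) q C₁ C₂) (hL : 0 < L)
    (hC₂ : 0 ≤ C₂) (hp : 0 < p) (hpq : p ≤ q) (X : Matrix (Fin m) (Fin n) ℝ) :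
    ∑ i ∈ range n, ∑ t, |A (X * ∑ j ∈ Ico (r + s + i * s) (r + s + i * s + s), singProj X j) t| ^ q
      ≤ C₂ * L * (s : ℝ) ^ ((1 / 2 - 1 / p) * q) * tailP X r p ^ (q / p) := by
  have hq : 0 < q := hp.trans_le hpq
  have hblock : ∀ i, 0 ≤ ∑ j ∈ Ico (r + i * s) (r + i * s + s), singValSeq X j ^ p :=
    fun i => sum_nonneg fun j _ => rpow_nonneg (singValSeq_nonneg X j) p
  calc _ ≤ ∑ i ∈ range n, C₂ * L *
          (∑ j ∈ Ico (r + s + i * s) (r + s + i * s + s), singValSeq X j ^ (2 : ℝ)) ^ (q / 2) :=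
        sum_le_sum fun i _ => hA.sum_abs_rpow_le hL X (by simp)
    _ ≤ ∑ i ∈ range n, C₂ * L * ((s : ℝ) ^ ((1 / 2 - 1 / p) * q) *
          (∑ j ∈ Ico (r + i * s) (r + i * s + s), singValSeq X j ^ p) ^ (q / p)) := by
        gcongr with i
        simpa using rpow_sum_sq_le_of_antitone (antitone_singValSeq X) (singValSeq_nonneg X) hp hq
          (I := Ico (r + i * s) (r + i * s + s)) (by simp; omega) (by simp)
    _ = C₂ * L * (s : ℝ) ^ ((1 / 2 - 1 / p) * q) *
          ∑ i ∈ range n, (∑ j ∈ Ico (r + i * s) (r + i * s + s), singValSeq X j ^ p) ^ (q / p) := by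
        rw [mul_sum]
        exact sum_congr rfl fun i _ => by ring
    _ ≤ C₂ * L * (s : ℝ) ^ ((1 / 2 - 1 / p) * q) *
          (∑ i ∈ range n, ∑ j ∈ Ico (r + i * s) (r + i * s + s), singValSeq X j ^ p) ^ (q / p) := by
        gcongr
        exact sum_rpow_le_rpow_sum _ (fun i _ => hblock i) ((one_le_div hp).2 hpq)
    _ ≤ _ := by
        rw [sum_sum_Ico_blocks]
        gcongr
        · exact sum_nonneg fun j _ => rpow_nonneg (singValSeq_nonneg X j) p
        · exact sum_Ico_le_tailP X hp r _

lemma IsRUB.headP_rpow_le {r s : ℕ} (hA : IsRUB A (s + r) q C₁ C₂) (hL : 0 < L) (hs : 0 < s)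
    (hp : 0 < p) (hpq : p ≤ q) (hq1 : q ≤ 1) (hC₁ : 0 < C₁) (hC₂ : 0 ≤ C₂)
    (X : Matrix (Fin m) (Fin n) ℝ) :
    headP X r 2 ^ (q / 2) ≤ (C₁ * L)⁻¹ * ∑ t, |A X t| ^ q +
      C₂ / C₁ * (s : ℝ) ^ ((1 / 2 - 1 / p) * q) * tailP X r p ^ (q / p) := by
  have hq : 0 < q := hp.trans_le hpq
  have hC₁L : 0 < C₁ * L := mul_pos hC₁ (Nat.cast_pos.2 hL)
  have hAZ : A (X * ∑ j ∈ range (r + s), singProj X j) =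
      A X - ∑ i ∈ range n, A (X * ∑ j ∈ Ico (r + s + i * s) (r + s + i * s + s), singProj X j) := by
    conv_rhs => enter [1, 2]; rw [eq_mul_sum_singProj_add_sum_blocks X r hs]
    rw [map_add, map_sum, add_sub_cancel_right]
  have hlow : C₁ * L * headP X r 2 ^ (q / 2) ≤ ∑ t, |A X t| ^ q +
      C₂ * L * (s : ℝ) ^ ((1 / 2 - 1 / p) * q) * tailP X r p ^ (q / p) :=
    calc C₁ * L * headP X r 2 ^ (q / 2)
        ≤ C₁ * L * (∑ j ∈ range (r + s), singValSeq X j ^ (2 : ℝ)) ^ (q / 2) := by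
          gcongr
          · exact sum_nonneg fun j _ => rpow_nonneg (singVal_nonneg X j) _
          · exact headP_le_sum_range X two_pos (le_add_right le_rfl)
      _ ≤ ∑ t, |A (X * ∑ j ∈ range (r + s), singProj X j) t| ^ q :=
          hA.mul_le_sum_abs_rpow hL X (by simp [add_comm])
      _ ≤ _ := by
          rw [hAZ]
          refine (sum_abs_rpow_sub_sum_le _ _ _ hq hq1).trans ?_
          gcongr
          exact hA.sum_tail_blocks_le hL hC₂ hp hpq X
  calc headP X r 2 ^ (q / 2) ≤ (∑ t, |A X t| ^ q +
        C₂ * L * (s : ℝ) ^ ((1 / 2 - 1 / p) * q) * tailP X r p ^ (q / p)) / (C₁ * L) := by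
        rwa [le_div_iff₀ hC₁L, mul_comm]
    _ = _ := by
        field_simp

end RUB

lemma rpow_rub_constant_eq {C₁ C₂ k r G p q : ℝ} (hC₁ : 0 < C₁) (hC₂ : 0 ≤ C₂) (hk : 0 < k)
    (hr : 0 < r) (hG : 0 ≤ G) (hp : 0 < p) (hq : 0 < q) :
    (C₂ / C₁ * (k * r) ^ ((1 / 2 - 1 / p) * q) * G ^ (q / p)) ^ (p / q) =
      (C₂ / (C₁ * k ^ ((1 / p - 1 / 2) * q))) ^ (p / q) * G / r ^ ((1 / p - 1 / 2) * p) := by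
  have hbase : C₂ / C₁ * (k * r) ^ ((1 / 2 - 1 / p) * q) * G ^ (q / p) =
      C₂ / (C₁ * k ^ ((1 / p - 1 / 2) * q)) * ((r ^ ((1 / p - 1 / 2) * q))⁻¹ * G ^ (q / p)) := by
    rw [show (1 / 2 - 1 / p) * q = -((1 / p - 1 / 2) * q) by ring, rpow_neg (by positivity),
      mul_rpow hk.le hr.le]
    field_simp
  have hexp₁ : (1 / p - 1 / 2) * q * (p / q) = (1 / p - 1 / 2) * p := by field_simp
  have hexp₂ : q / p * (p / q) = 1 := by field_simp
  rw [hbase, mul_rpow (div_nonneg hC₂ (by positivity)) (by positivity),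
    mul_rpow (by positivity) (by positivity), inv_rpow (by positivity), ← rpow_mul hr.le,
    ← rpow_mul hG, hexp₁, hexp₂, rpow_one]
  ring

theorem rub_implies_robust_nsp_general (m n L r s : ℕ) (hr : 0 < r) (hL : 0 < L)
    (k : ℝ) (hk : 1 < k) (hs : (s : ℝ) = k * r)
    (p q C₁ C₂ : ℝ) (hp : 0 < p) (hpq : p ≤ q) (hq1 : q ≤ 1)
    (hC₁ : 0 < C₁) (hC₂ : 0 < C₂)
    (A : Matrix (Fin m) (Fin n) ℝ →ₗ[ℝ] (Fin L → ℝ))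
    (hRUB : ∀ Z : Matrix (Fin m) (Fin n) ℝ, Z.rank ≤ s + r →
        C₁ * ((∑ j, (singVal Z j) ^ (2 : ℝ)) ^ (q / 2)) ≤ (∑ j, |A Z j| ^ q) / L ∧
        (∑ j, |A Z j| ^ q) / L ≤ C₂ * ((∑ j, (singVal Z j) ^ (2 : ℝ)) ^ (q / 2))) :
    ∀ X : Matrix (Fin m) (Fin n) ℝ,
      (∑ j ∈ Finset.univ.filter (fun j : Fin n => (j : ℕ) < r),
          (singVal X j) ^ (2 : ℝ)) ^ (p / 2)
        ≤ (C₁ * L) ^ (-(p / q)) * (∑ j, |A X j| ^ q) ^ (p / q) +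
          (C₂ / (C₁ * k ^ ((1 / p - 1 / 2) * q))) ^ (p / q) *
            tailP X r p / (r : ℝ) ^ ((1 / p - 1 / 2) * p) := by
  intro X
  have hq : 0 < q := hp.trans_le hpq
  have hk₀ : 0 < k := one_pos.trans hk
  have hr₀ : (0 : ℝ) < r := Nat.cast_pos.2 hr
  have hs₀ : 0 < s := by exact_mod_cast (show (0 : ℝ) < s by rw [hs]; positivity)
  have hC₁L : 0 < C₁ * L := mul_pos hC₁ (Nat.cast_pos.2 hL)
  have hH : 0 ≤ headP X r 2 := sum_nonneg fun j _ => rpow_nonneg (singVal_nonneg X j) _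
  have hG := tailP_nonneg X r p
  have hcore := IsRUB.headP_rpow_le hRUB hL hs₀ hp hpq hq1 hC₁ hC₂.le X
  rw [hs] at hcore
  calc headP X r 2 ^ (p / 2) = (headP X r 2 ^ (q / 2)) ^ (p / q) := by
        rw [← rpow_mul hH]
        congr 1
        field_simp
    _ ≤ _ := rpow_le_rpow (rpow_nonneg hH _) hcore (by positivity)
    _ ≤ _ := rpow_add_le_add_rpow (mul_nonneg (inv_nonneg.2 hC₁L.le) (by positivity))
        (mul_nonneg (mul_nonneg (div_nonneg hC₂.le hC₁.le) (by positivity)) (rpow_nonneg hG _))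
        (by positivity) (div_le_one_of_le₀ hpq hq.le)
    _ = _ := by
        rw [mul_rpow (inv_nonneg.2 hC₁L.le) (by positivity), inv_rpow hC₁L.le, ← rpow_neg hC₁L.le,
          rpow_rub_constant_eq hC₁ hC₂.le hk₀ hr₀ hG hp hq]

theorem rub_implies_robust_nsp (m n L r s : ℕ) (hr : 0 < r) (hL : 0 < L)
    (k : ℝ) (hk : 1 < k) (hs : (s : ℝ) = k * r)
    (p q C₁ C₂ : ℝ) (hp : 0 < p) (hpq : p ≤ q) (hq1 : q ≤ 1)
    (hC₁ : 0 < C₁) (hC₂ : 0 < C₂)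
    (hratio : C₂ / C₁ < k ^ ((1 / p - 1 / 2) * q))
    (A : Matrix (Fin m) (Fin n) ℝ →ₗ[ℝ] (Fin L → ℝ))
    (hRUB : ∀ Z : Matrix (Fin m) (Fin n) ℝ, Z.rank ≤ s + r →
        C₁ * ((∑ j, (singVal Z j) ^ (2 : ℝ)) ^ (q / 2)) ≤ (∑ j, |A Z j| ^ q) / L ∧
        (∑ j, |A Z j| ^ q) / L ≤ C₂ * ((∑ j, (singVal Z j) ^ (2 : ℝ)) ^ (q / 2))) :
    ∀ X : Matrix (Fin m) (Fin n) ℝ,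
      (∑ j ∈ Finset.univ.filter (fun j : Fin n => (j : ℕ) < r),
          (singVal X j) ^ (2 : ℝ)) ^ (p / 2)
        ≤ (C₁ * L) ^ (-(p / q)) * (∑ j, |A X j| ^ q) ^ (p / q) +
          (C₂ / (C₁ * k ^ ((1 / p - 1 / 2) * q))) ^ (p / q) *
            tailP X r p / (r : ℝ) ^ ((1 / p - 1 / 2) * p) :=
  rub_implies_robust_nsp_general m n L r s hr hL k hk hs p q C₁ C₂ hp hpq hq1 hC₁ hC₂ A hRUB
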